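/- arXiv:math/0109160 — 3 statements merged into one kernel-verified Lean document; each statement's English description precedes it below -/
import Mathlib

section
/- Let G be a metabelian group and let H be a subnormal subgroup of defect d in G. If H is an Inn-basis of G, then Z_i(H) ≤ Z_{i+d}(G) for every positive integer i. In particular, if H is nilpotent of class c then G is nilpotent of class at most c+d. -/
/-!
In a metabelian group the derived subgroup `G'` is abelian, and expanding `⁅x, g * h⁆` in two ways
gives `⁅⁅x, g⁆, h⁆ = ⁅⁅x, h⁆, g⁆ * ⁅x, ⁅g, h⁆⁆`; for `z ∈ G'` the last factor vanishes, so
commutators of `z` with two elements may be taken in either order. Hence commutators with elements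
of `G` can be moved past commutators with elements of `H`, and since `C_G(H) = Z(G)`, an element
`z ∈ G'` with `⁅z, h⁆ ∈ Z_n(G)` for all `h ∈ H` already lies in `Z_{n+1}(G)`.

For `x ∈ Z_{i+1}(H)` one shows `⁅x, c_j⁆ ≤ Z_{i+j}(G)` by induction along the subnormal series
`H = c_0 ⊴ c_1 ⊴ ⋯ ⊴ c_d = G`: the identity above splits `⁅⁅x, g⁆, h⁆` into `⁅⁅x, h⁆, g⁆ ∈ Z_i(G)`
and `⁅x, ⁅g, h⁆⁆` with `⁅g, h⁆ ∈ c_{j-1}`. At `j = d` this says `Z_{i+1}(H) ≤ Z_{i+1+d}(G)`.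
When `H ≤ Z_{n+1}(G)`, the same identity puts every commutator of `G` into `Z_n(G)`, so
`Z_{n+1}(G) = G`.
-/

open Subgroup (centralizer center commutator_le commutator_le_left commutator_mem_commutator
  mem_bot mem_top mem_centralizer_iff)
open scoped commutatorElement

section Metabelian

variable {G : Type*} [Group G]

lemma commutatorElement_mem_commutator (a b : G) : ⁅a, b⁆ ∈ commutator G :=
  commutator_mem_commutator (mem_top a) (mem_top b)

lemma conj_mem_commutator {a : G} (ha : a ∈ commutator G) (g : G) :
    g * a * g⁻¹ ∈ commutator G :=
  Subgroup.Normal.conj_mem inferInstance a ha g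

lemma commute_of_mem_commutator (hG : ⁅commutator G, commutator G⁆ = ⊥) {a b : G}
    (ha : a ∈ commutator G) (hb : b ∈ commutator G) : Commute a b :=
  commutatorElement_eq_one_iff_commute.mp (mem_bot.mp (hG ▸ commutator_mem_commutator ha hb))

lemma commutatorElement_commutatorElement_eq_mul (hG : ⁅commutator G, commutator G⁆ = ⊥)
    (x g h : G) : ⁅⁅x, g⁆, h⁆ = ⁅⁅x, h⁆, g⁆ * ⁅x, ⁅g, h⁆⁆ := by
  have hA := commutatorElement_mem_commutator x g
  have hB := commutatorElement_mem_commutator x h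
  have hC := commutatorElement_mem_commutator x ⁅g, h⁆
  have key : ⁅x, g⁆ * (g * ⁅x, h⁆ * g⁻¹) = ⁅x, ⁅g, h⁆⁆ * (⁅x, h⁆ * (h * ⁅x, g⁆ * h⁻¹)) := by
    have hconj : ⁅g, h⁆ * ⁅x, h * g⁆ * ⁅g, h⁆⁻¹ = ⁅x, h * g⁆ :=
      (commute_of_mem_commutator hG (commutatorElement_mem_commutator g h)
        (commutatorElement_mem_commutator x (h * g))).mul_inv_cancel
    calc ⁅x, g⁆ * (g * ⁅x, h⁆ * g⁻¹)
        = ⁅x, g * h⁆ := by rw [commutatorElement_mul_right_eq_mul_conj]; group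
      _ = ⁅x, ⁅g, h⁆ * (h * g)⁆ := by congr 1; group
      _ = ⁅x, ⁅g, h⁆⁆ * (⁅g, h⁆ * ⁅x, h * g⁆ * ⁅g, h⁆⁻¹) := by
          rw [commutatorElement_mul_right_eq_mul_conj]; group
      _ = ⁅x, ⁅g, h⁆⁆ * (⁅x, h⁆ * (h * ⁅x, g⁆ * h⁻¹)) := by
          rw [hconj, commutatorElement_mul_right_eq_mul_conj]; group
  have hP := conj_mem_commutator hA h
  have hQ := conj_mem_commutator hB g
  -- `⁅⁅x, g⁆, h⁆ = ⁅x, g⁆ * (h * ⁅x, g⁆ * h⁻¹)⁻¹`, so `key` rearranges to the claim inside `G'`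
  calc ⁅⁅x, g⁆, h⁆
      = ⁅x, g⁆ * (g * ⁅x, h⁆ * g⁻¹) * (h * ⁅x, g⁆ * h⁻¹)⁻¹
        * ((h * ⁅x, g⁆ * h⁻¹) * (g * ⁅x, h⁆ * g⁻¹)⁻¹ * (h * ⁅x, g⁆ * h⁻¹)⁻¹) := by
        rw [commutatorElement_def ⁅x, g⁆]; group
    _ = ⁅x, ⁅g, h⁆⁆ * (⁅x, h⁆ * (g * ⁅x, h⁆ * g⁻¹)⁻¹) := by
        rw [key, (commute_of_mem_commutator hG hP hQ).inv_right.mul_inv_cancel]; group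
    _ = ⁅⁅x, h⁆, g⁆ * ⁅x, ⁅g, h⁆⁆ := by
        rw [(commute_of_mem_commutator hG hC (mul_mem hB (inv_mem hQ))).eq,
          commutatorElement_def ⁅x, h⁆]
        group

lemma commutatorElement_commutatorElement_comm (hG : ⁅commutator G, commutator G⁆ = ⊥)
    {z : G} (hz : z ∈ commutator G) (g h : G) : ⁅⁅z, g⁆, h⁆ = ⁅⁅z, h⁆, g⁆ := by
  rw [commutatorElement_commutatorElement_eq_mul hG,
    (commute_of_mem_commutator hG hz (commutatorElement_mem_commutator g h)).commutator_eq,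
    mul_one]

end Metabelian

section UpperCentralSeries

variable {G : Type*} [Group G]

lemma commutatorElement_mem_upperCentralSeries_of_left_mem {n : ℕ} {y : G}
    (hy : y ∈ Subgroup.upperCentralSeries G n) (g : G) :
    ⁅y, g⁆ ∈ Subgroup.upperCentralSeries G n :=
  commutator_le_left (Subgroup.upperCentralSeries G n) ⊤ (commutator_mem_commutator hy (mem_top g))

lemma commutatorElement_mem_upperCentralSeries_of_right_mem_succ {n : ℕ} {y : G}
    (hy : y ∈ Subgroup.upperCentralSeries G (n + 1)) (g : G) :
    ⁅g, y⁆ ∈ Subgroup.upperCentralSeries G n := by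
  rw [← commutatorElement_inv]
  exact inv_mem (Subgroup.mem_upperCentralSeries_succ_iff.mp hy g)

lemma le_upperCentralSeries_succ_of_commutator_le {K : Subgroup G} {n : ℕ}
    (hK : ⁅K, ⊤⁆ ≤ Subgroup.upperCentralSeries G n) : K ≤ Subgroup.upperCentralSeries G (n + 1) :=
  fun _ hx => Subgroup.mem_upperCentralSeries_succ_iff.mpr fun y =>
    hK (commutator_mem_commutator hx (mem_top y))

end UpperCentralSeries

section InnBasis

variable {G : Type*} [Group G] {H : Subgroup G}

theorem mem_upperCentralSeries_succ_of_innBasis (hG : ⁅commutator G, commutator G⁆ = ⊥)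
    (hH : centralizer (H : Set G) = center G) :
    ∀ {n : ℕ} {z : G}, z ∈ commutator G → (∀ h ∈ H, ⁅z, h⁆ ∈ Subgroup.upperCentralSeries G n) →
      z ∈ Subgroup.upperCentralSeries G (n + 1)
  | 0, z, _, hzH => by
      rw [Subgroup.upperCentralSeries_one, ← hH, mem_centralizer_iff]
      exact fun h hh => (commutatorElement_eq_one_iff_mul_comm.mp (mem_bot.mp (hzH h hh))).symm
  | n + 1, z, hz, hzH => fun w =>
      mem_upperCentralSeries_succ_of_innBasis hG hH (commutatorElement_mem_commutator z w)
        fun h hh => commutatorElement_commutatorElement_comm hG hz w h ▸ hzH h hh w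

theorem coe_mem_upperCentralSeries_of_innBasis (hG : ⁅commutator G, commutator G⁆ = ⊥)
    (hH : centralizer (H : Set G) = center G) :
    ∀ {n : ℕ} {x : H}, x ∈ Subgroup.upperCentralSeries H n → (x : G) ∈ commutator G →
      (x : G) ∈ Subgroup.upperCentralSeries G n
  | 0, x, hx, _ => by rw [mem_bot.mp hx]; exact one_mem _
  | n + 1, x, hx, hxG => mem_upperCentralSeries_succ_of_innBasis hG hH hxG fun h hh =>
      coe_mem_upperCentralSeries_of_innBasis hG hH (hx ⟨h, hh⟩)
        (commutatorElement_mem_commutator _ _)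

theorem commutator_map_upperCentralSeries_succ_le (hG : ⁅commutator G, commutator G⁆ = ⊥)
    (hH : centralizer (H : Set G) = center G) (i : ℕ) :
    ⁅(Subgroup.upperCentralSeries H (i + 1)).map H.subtype, H⁆ ≤
      Subgroup.upperCentralSeries G i := by
  rw [commutator_le]
  rintro _ ⟨x, hx, rfl⟩ h hh
  exact coe_mem_upperCentralSeries_of_innBasis hG hH (hx ⟨h, hh⟩)
    (commutatorElement_mem_commutator _ _)

theorem commutator_map_upperCentralSeries_succ_le_succ (hG : ⁅commutator G, commutator G⁆ = ⊥)
    (hH : centralizer (H : Set G) = center G) {K L : Subgroup G} (hKL : ⁅K, H⁆ ≤ L) {i n : ℕ}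
    (hL : ⁅(Subgroup.upperCentralSeries H (i + 1)).map H.subtype, L⁆ ≤
      Subgroup.upperCentralSeries G (i + n)) :
    ⁅(Subgroup.upperCentralSeries H (i + 1)).map H.subtype, K⁆ ≤
      Subgroup.upperCentralSeries G (i + n + 1) := by
  rw [commutator_le]
  intro x hx g hg
  refine mem_upperCentralSeries_succ_of_innBasis hG hH (commutatorElement_mem_commutator x g)
    fun h hh => ?_
  rw [commutatorElement_commutatorElement_eq_mul hG]
  have hxh : ⁅x, h⁆ ∈ Subgroup.upperCentralSeries G i :=
    commutator_map_upperCentralSeries_succ_le hG hH i (commutator_mem_commutator hx hh)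
  exact mul_mem
    (Subgroup.upperCentralSeries_mono G (Nat.le_add_right i n)
      (commutatorElement_mem_upperCentralSeries_of_left_mem hxh g))
    (hL (commutator_mem_commutator hx (hKL (commutator_mem_commutator hg hh))))

theorem commutator_map_upperCentralSeries_succ_le_of_subnormal
    (hG : ⁅commutator G, commutator G⁆ = ⊥) (hH : centralizer (H : Set G) = center G)
    {d : ℕ} {c : ℕ → Subgroup G} (hc0 : c 0 = H) (hle : ∀ i < d, c i ≤ c (i + 1))
    (hnorm : ∀ i < d, ∀ x ∈ c i, ∀ g ∈ c (i + 1), g * x * g⁻¹ ∈ c i) (i : ℕ) :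
    ∀ j ≤ d, ⁅(Subgroup.upperCentralSeries H (i + 1)).map H.subtype, c j⁆ ≤
      Subgroup.upperCentralSeries G (i + j)
  | 0, _ => hc0 ▸ commutator_map_upperCentralSeries_succ_le hG hH i
  | j + 1, hj => by
      have hHc : H ≤ c j := by
        induction j with
        | zero => exact hc0.ge
        | succ k ih => exact (ih (by omega)).trans (hle k (by omega))
      have hcomm : ⁅c (j + 1), H⁆ ≤ c j := commutator_le.mpr fun g hg h hh => by
        rw [commutatorElement_def]
        exact mul_mem (hnorm j (by omega) h (hHc hh) g hg) (inv_mem (hHc hh))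
      exact commutator_map_upperCentralSeries_succ_le_succ hG hH hcomm
        (commutator_map_upperCentralSeries_succ_le_of_subnormal hG hH hc0 hle hnorm i j (by omega))

theorem upperCentralSeries_succ_eq_top_of_le (hG : ⁅commutator G, commutator G⁆ = ⊥)
    (hH : centralizer (H : Set G) = center G) :
    ∀ {n : ℕ}, H ≤ Subgroup.upperCentralSeries G (n + 1) →
      Subgroup.upperCentralSeries G (n + 1) = ⊤
  | 0, hHn => by
      rw [Subgroup.upperCentralSeries_one, ← hH]
      exact Subgroup.centralizer_eq_top_iff_subset.mpr (Subgroup.upperCentralSeries_one G ▸ hHn)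
  | n + 1, hHn => by
      refine eq_top_iff.mpr (le_upperCentralSeries_succ_of_commutator_le (commutator_le.mpr ?_))
      intro a _ b _
      refine mem_upperCentralSeries_succ_of_innBasis hG hH (commutatorElement_mem_commutator a b)
        fun h hh => ?_
      rw [commutatorElement_commutatorElement_eq_mul hG]
      exact mul_mem
        (Subgroup.mem_upperCentralSeries_succ_iff.mp
          (commutatorElement_mem_upperCentralSeries_of_right_mem_succ (hHn hh) a) b)
        (commutatorElement_mem_upperCentralSeries_of_right_mem_succ
          (commutatorElement_mem_upperCentralSeries_of_right_mem_succ (hHn hh) b) a)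

end InnBasis

/-- Let `G` be a metabelian group and let `H` be a subnormal subgroup of defect `d` of `G`
which is an Inn-basis of `G` (i.e. `C_G(H) = Z(G)`).  Then `Z_i(H) ≤ Z_{i+d}(G)` for every
positive integer `i`; in particular, if `H` is nilpotent of class `c` then `G` is nilpotent
of class at most `c + d`. -/
theorem upperCentralSeries_le_of_subnormal_innBasis_metabelian {G : Type*} [Group G]
    (hmetab : ⁅commutator G, commutator G⁆ = (⊥ : Subgroup G))
    (H : Subgroup G) (d : ℕ) (c : ℕ → Subgroup G)
    (hc0 : c 0 = H) (hcd : c d = ⊤)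
    (hle : ∀ i < d, c i ≤ c (i + 1))
    (hnorm : ∀ i < d, ∀ x ∈ c i, ∀ g ∈ c (i + 1), g * x * g⁻¹ ∈ c i)
    (hbasis : Subgroup.centralizer (H : Set G) = Subgroup.center G) :
    (∀ i : ℕ, 0 < i → (upperCentralSeries H i).map H.subtype ≤ upperCentralSeries G (i + d)) ∧
      (∀ k : ℕ, upperCentralSeries H k = ⊤ → upperCentralSeries G (k + d) = ⊤) := by
  have hZ : ∀ i, (Subgroup.upperCentralSeries H i).map H.subtype ≤
      Subgroup.upperCentralSeries G (i + d) := by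
    rintro (_ | i)
    · simp
    · rw [Nat.add_right_comm]
      refine le_upperCentralSeries_succ_of_commutator_le ?_
      exact hcd ▸ commutator_map_upperCentralSeries_succ_le_of_subnormal
        hmetab hbasis hc0 hle hnorm i d le_rfl
  refine ⟨fun i _ => hZ i, fun k hk => ?_⟩
  have hHk : H ≤ Subgroup.upperCentralSeries G (k + d) :=
    fun h hh => hZ k ⟨⟨h, hh⟩, (Subgroup.eq_top_iff' _).mp hk _, rfl⟩
  cases hkd : k + d with
  | zero =>
      obtain rfl : d = 0 := by omega
      exact top_le_iff.mp (hc0.symm.trans hcd ▸ hkd ▸ hHk)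
  | succ n => exact upperCentralSeries_succ_eq_top_of_le hmetab hbasis (hkd ▸ hHk)
end

section
/- Let the subgroup H be an Aut-basis of the group G and let N = H^G be the normal closure of H in G. Then Hom(G/N, Z(H)) = 0, i.e., the only group homomorphism from G/N to the centre of H is the trivial one. -/
/-!
For `z` in the centre of `H`, conjugation by `z` fixes `H` pointwise, so it is the identity and
`Z(H) ≤ Z(G)`. Given `f : G/N → Z(H)`, the map `c g = f(gN)` is then a central homomorphism that
kills `H` and takes values in `H ≤ N`, so `c ∘ c = 1`; hence `g ↦ g * c g` is an automorphism
(with inverse `g ↦ g * (c g)⁻¹`) fixing `H` pointwise. It is therefore the identity, i.e. `f = 1`.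
-/

section

variable {G : Type*} [Group G]

def MonoidHom.mulSelfEquiv (c : G →* Subgroup.center G) (hc : ∀ g, c (c g) = 1) : G ≃* G where
  toFun g := g * c g
  invFun g := g * (c g)⁻¹
  left_inv g := by simp [hc]
  right_inv g := by simp [hc]
  map_mul' a b := by
    simp only [map_mul, Subgroup.coe_mul]
    rw [mul_assoc a, ← mul_assoc b, Subgroup.mem_center_iff.mp (c a).2 b]
    group

theorem MonoidHom.mulSelfEquiv_apply (c : G →* Subgroup.center G) (hc : ∀ g, c (c g) = 1)
    (g : G) : c.mulSelfEquiv hc g = g * c g :=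
  rfl

namespace Subgroup

def IsAutBasis (H : Subgroup G) : Prop :=
  ∀ φ : G ≃* G, (∀ h ∈ H, φ h = h) → ∀ g : G, φ g = g

variable {H : Subgroup G}

theorem IsAutBasis.coe_mem_center (hH : H.IsAutBasis) {z : H} (hz : z ∈ center H) :
    (z : G) ∈ center G := by
  refine mem_center_iff.mpr fun x => ?_
  have hfix : ∀ h ∈ H, MulAut.conj (z : G) h = h := fun h hh => by
    have hzh : h * z = z * h := congrArg Subtype.val (mem_center_iff.mp hz ⟨h, hh⟩)
    rw [MulAut.conj_apply, ← hzh]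
    group
  have hx := hH (MulAut.conj (z : G)) hfix x
  rw [MulAut.conj_apply, mul_inv_eq_iff_eq_mul] at hx
  exact hx.symm

def IsAutBasis.centerHom (hH : H.IsAutBasis) : center H →* center G :=
  (H.subtype.comp (center H).subtype).codRestrict (center G) fun z => hH.coe_mem_center z.2

theorem IsAutBasis.centerHom_injective (hH : H.IsAutBasis) : Function.Injective hH.centerHom :=
  fun _ _ h => Subtype.ext <| Subtype.ext <| congrArg (fun z : center G => (z : G)) h

theorem IsAutBasis.eq_one_of_forall_apply_mem_of_le_ker (hH : H.IsAutBasis)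
    (c : G →* center G) (hrange : ∀ g, (c g : G) ∈ H) (hker : H ≤ c.ker) : c = 1 := by
  let φ := c.mulSelfEquiv fun g => MonoidHom.mem_ker.mp (hker (hrange g))
  have hfix : ∀ h ∈ H, φ h = h := fun h hh => by
    rw [c.mulSelfEquiv_apply, MonoidHom.mem_ker.mp (hker hh), OneMemClass.coe_one, mul_one]
  ext g
  simpa [φ, c.mulSelfEquiv_apply] using hH φ hfix g

end Subgroup

end

/-- Let the subgroup `H` be an Aut-basis of the group `G` and let `N = H^G` be the normal
closure of `H` in `G`.  Then `Hom(G/N, Z(H)) = 0`. -/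
theorem hom_quotient_normalClosure_to_center_eq_one {G : Type*} [Group G] (H : Subgroup G)
    (hbasis : ∀ φ : G ≃* G, (∀ h ∈ H, φ h = h) → ∀ g : G, φ g = g) :
    ∀ f : (G ⧸ Subgroup.normalClosure (H : Set G)) →* Subgroup.center H, f = 1 := by
  intro f
  have hH : H.IsAutBasis := hbasis
  let c := hH.centerHom.comp (f.comp (QuotientGroup.mk' _))
  have hc : c = 1 := hH.eq_one_of_forall_apply_mem_of_le_ker c (fun g => (f g : H).2)
    fun h hh => by simp [c, (QuotientGroup.eq_one_iff h).mpr (Subgroup.subset_normalClosure hh)]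
  refine QuotientGroup.monoidHom_ext _ (MonoidHom.ext fun g => hH.centerHom_injective ?_)
  simpa [c] using DFunLike.congr_fun hc g
end

section
/- Let N be a normal subgroup of a group G containing Z(G). Then N is an Aut-basis of G if and only if C_G(N) = Z(G) and Hom(G/N, Z(G)) = 0. -/
/-!
An element of `C_G(N)` induces an inner automorphism fixing `N` pointwise, and a homomorphism
`f : G/N → Z(G)` induces the central automorphism `g ↦ g f(gN)`, which fixes `N` pointwise and is
bijective because `f` kills `Z(G) ≤ N`. Conversely, if `φ` fixes the normal subgroup `N`
pointwise, then `g⁻¹ φ(g)` centralizes `N`; when `C_G(N) = Z(G)` the map `g ↦ g⁻¹ φ(g)` is a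
homomorphism `G → Z(G)` killing `N`, so it is trivial and `φ = id`.
-/

open Subgroup

section

variable {G : Type*} [Group G]

theorem centralizer_le_center_of_forall_mulAut_fixing (N : Subgroup G)
    (h : ∀ φ : G ≃* G, (∀ x ∈ N, φ x = x) → ∀ g : G, φ g = g) :
    centralizer (N : Set G) ≤ center G := by
  intro c hc
  have hconj : ∀ g, c * g * c⁻¹ = g :=
    h (MulAut.conj c) fun x hx => by
      rw [MulAut.conj_apply, ← mem_centralizer_iff.mp hc x hx, mul_inv_cancel_right]
  exact mem_center_iff.mpr fun g => calc
    g * c = c * g * c⁻¹ * c := by rw [hconj]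
    _ = c * g := by group

namespace MonoidHom

def centralMulEquiv (f : G →* center G) (hf : center G ≤ f.ker) : G ≃* G where
  toFun g := g * f g
  invFun g := g * (f g : G)⁻¹
  left_inv g := by
    have : f (f g : G) = 1 := hf (f g).2
    simp [this]
  right_inv g := by
    have : f (f g : G)⁻¹ = 1 := hf (inv_mem (f g).2)
    simp [this]
  map_mul' g h := calc
    g * h * f (g * h) = g * (h * f g) * f h := by rw [map_mul, coe_mul]; group
    _ = g * (f g * h) * f h := by rw [mem_center_iff.mp (f g).2 h]
    _ = g * f g * (h * f h) := by group

theorem centralMulEquiv_apply (f : G →* center G) (hf : center G ≤ f.ker) (g : G) :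
    centralMulEquiv f hf g = g * f g := rfl

def invMulApplyHom (φ : G →* G) (hφ : ∀ g, g⁻¹ * φ g ∈ center G) : G →* center G where
  toFun g := ⟨g⁻¹ * φ g, hφ g⟩
  map_one' := by ext; simp
  map_mul' g h := Subtype.ext <| calc
    (g * h)⁻¹ * φ (g * h) = h⁻¹ * (g⁻¹ * φ g) * φ h := by rw [map_mul]; group
    _ = g⁻¹ * φ g * h⁻¹ * φ h := by rw [mem_center_iff.mp (hφ g) h⁻¹]
    _ = g⁻¹ * φ g * (h⁻¹ * φ h) := by group

theorem invMulApplyHom_apply (φ : G →* G) (hφ : ∀ g, g⁻¹ * φ g ∈ center G) (g : G) :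
    (invMulApplyHom φ hφ g : G) = g⁻¹ * φ g := rfl

end MonoidHom

theorem hom_quotient_center_eq_one_of_forall_mulAut_fixing (N : Subgroup G) [N.Normal]
    (hZ : center G ≤ N) (h : ∀ φ : G ≃* G, (∀ x ∈ N, φ x = x) → ∀ g : G, φ g = g)
    (f : G ⧸ N →* center G) : f = 1 := by
  set f' := f.comp (QuotientGroup.mk' N)
  have hker : N ≤ f'.ker := fun x hx => by
    simp [f', (QuotientGroup.eq_one_iff x).mpr hx]
  have hfix := h (f'.centralMulEquiv (hZ.trans hker)) fun x hx => by
    rw [MonoidHom.centralMulEquiv_apply, hker hx, coe_one, mul_one]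
  refine QuotientGroup.monoidHom_ext N (MonoidHom.ext fun g => Subtype.ext ?_)
  simpa [f', MonoidHom.centralMulEquiv_apply] using hfix g

theorem inv_mul_apply_mem_centralizer {F : Type*} [FunLike F G G] [MonoidHomClass F G G]
    (N : Subgroup G) [N.Normal] (φ : F) (hφ : ∀ x ∈ N, φ x = x) (g : G) :
    g⁻¹ * φ g ∈ centralizer (N : Set G) := by
  refine mem_centralizer_iff.mpr fun n hn => ?_
  have hconj : φ g * n * (φ g)⁻¹ = g * n * g⁻¹ := by
    simpa only [map_mul, map_inv, hφ n hn] using hφ _ (Normal.conj_mem ‹_› n hn g)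
  calc n * (g⁻¹ * φ g) = g⁻¹ * (g * n * g⁻¹) * φ g := by group
    _ = g⁻¹ * (φ g * n * (φ g)⁻¹) * φ g := by rw [hconj]
    _ = g⁻¹ * φ g * n := by group

theorem apply_eq_self_of_forall_hom_quotient_center_eq_one (N : Subgroup G) [N.Normal]
    (hC : centralizer (N : Set G) ≤ center G) (hf : ∀ f : G ⧸ N →* center G, f = 1)
    (φ : G ≃* G) (hφ : ∀ x ∈ N, φ x = x) (g : G) : φ g = g := by
  set F := MonoidHom.invMulApplyHom (φ : G →* G)
    fun g => hC (inv_mul_apply_mem_centralizer N φ hφ g)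
  have hFN : N ≤ F.ker := fun n hn => Subtype.ext <| by
    simp [F, MonoidHom.invMulApplyHom_apply, hφ n hn]
  have hFg : (F g : G) = 1 :=
    congrArg Subtype.val (DFunLike.congr_fun (hf (QuotientGroup.lift N F hFN)) (g : G ⧸ N))
  rwa [MonoidHom.invMulApplyHom_apply, inv_mul_eq_one, eq_comm] at hFg

end

/-- Let `N` be a normal subgroup of a group `G` containing `Z(G)`.  Then `N` is an
Aut-basis of `G` if and only if `C_G(N) = Z(G)` and `Hom(G/N, Z(G)) = 0`. -/
theorem autBasis_iff_centralizer_eq_center_and_hom_eq_one {G : Type*} [Group G]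
    (N : Subgroup G) [N.Normal] (hZ : Subgroup.center G ≤ N) :
    (∀ φ : G ≃* G, (∀ x ∈ N, φ x = x) → ∀ g : G, φ g = g) ↔
      (Subgroup.centralizer (N : Set G) = Subgroup.center G ∧
        ∀ f : (G ⧸ N) →* Subgroup.center G, f = 1) := by
  constructor
  · intro h
    exact ⟨(centralizer_le_center_of_forall_mulAut_fixing N h).antisymm
        (center_le_centralizer _),
      hom_quotient_center_eq_one_of_forall_mulAut_fixing N hZ h⟩
  · rintro ⟨hC, hf⟩
    exact apply_eq_self_of_forall_hom_quotient_center_eq_one N hC.le hf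
end
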